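/- arXiv:2007.11570 — 7 statements merged into one kernel-verified Lean document; each statement's English description precedes it below -/
import Mathlib

section
/- If k ≥ 2, the undirected graph X_f is connected: for every pair of vertices y, z ∈ K_f there is a finite sequence of vertices starting at y and ending at z in which consecutive vertices are adjacent in X_f. -/
/-!
Write `ξ` for the root. Starting from `0`, the moves `w ↦ w + ξ` and `w ↦ ξ * w` reach
`ξ * q(ξ)` for every polynomial `q`, by Horner's scheme: adding `ξ` repeatedly gives
`w + a ξ` for every `a ∈ 𝔽_p`, and multiplying by `ξ` appends a factor `X`. Since `k ≥ 2`
we have `ξ ≠ 0`, so every `w = ξ * (ξ⁻¹ w)` is reached from `0`; as the adjacency is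
symmetric, any two vertices are joined through `0`.
-/

open Polynomial Relation

namespace AdjoinRoot

theorem root_ne_zero_of_two_le_natDegree {R : Type*} [CommRing R] [IsDomain R] {f : R[X]}
    (hf : 2 ≤ f.natDegree) : root f ≠ 0 := by
  intro h
  rw [← mk_X, mk_eq_zero] at h
  have := natDegree_le_of_dvd h X_ne_zero
  rw [natDegree_X] at this
  omega

theorem aeval_root_surjective {R : Type*} [CommRing R] (f : R[X]) :
    Function.Surjective (aeval (R := R) (root f)) := fun g => by
  obtain ⟨q, rfl⟩ := mk_surjective g
  exact ⟨q, aeval_eq q⟩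

end AdjoinRoot

section Reachability

variable {K : Type*} [Field K] {r : K → K → Prop} {ξ : K}

theorem reflTransGen_add_natCast_mul (hadd : ∀ w, r w (w + ξ)) (w : K) (n : ℕ) :
    ReflTransGen r w (w + n * ξ) := by
  induction n with
  | zero => simpa using .refl
  | succ n ih =>
    have hsucc : w + ((n + 1 : ℕ) : K) * ξ = w + n * ξ + ξ := by push_cast; ring
    exact hsucc ▸ ih.tail (hadd _)

theorem reflTransGen_add_algebraMap_mul {p : ℕ} [NeZero p] [Algebra (ZMod p) K]
    (hadd : ∀ w, r w (w + ξ)) (w : K) (a : ZMod p) :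
    ReflTransGen r w (w + algebraMap (ZMod p) K a * ξ) := by
  rw [← ZMod.natCast_zmod_val a, map_natCast]
  exact reflTransGen_add_natCast_mul hadd w a.val

theorem reflTransGen_zero_mul_aeval {p : ℕ} [NeZero p] [Algebra (ZMod p) K]
    (hadd : ∀ w, r w (w + ξ)) (hmul : ∀ w ≠ 0, r w (ξ * w)) (q : (ZMod p)[X]) :
    ReflTransGen r 0 (ξ * aeval ξ q) := by
  induction q using Polynomial.recOnHorner with
  | M0 => simpa using .refl
  | MC q a _ _ ih =>
    have hC : ξ * aeval ξ (q + C a) = ξ * aeval ξ q + algebraMap (ZMod p) K a * ξ := by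
      rw [map_add, aeval_C]; ring
    exact hC ▸ ih.trans (reflTransGen_add_algebraMap_mul hadd _ a)
  | MX q _ ih =>
    have hX : ξ * aeval ξ (q * X) = ξ * (ξ * aeval ξ q) := by
      rw [map_mul, aeval_X]; ring
    rw [hX]
    by_cases h0 : ξ * aeval ξ q = 0
    · rw [h0, mul_zero]
    · exact ih.tail (hmul _ h0)

theorem reflTransGen_zero_of_aeval_surjective {p : ℕ} [NeZero p] [Algebra (ZMod p) K]
    (hξ : ξ ≠ 0) (hsurj : Function.Surjective (aeval (R := ZMod p) ξ))
    (hadd : ∀ w, r w (w + ξ)) (hmul : ∀ w ≠ 0, r w (ξ * w)) (w : K) :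
    ReflTransGen r 0 w := by
  obtain ⟨q, hq⟩ := hsurj (ξ⁻¹ * w)
  simpa [hq, hξ] using reflTransGen_zero_mul_aeval hadd hmul q

end Reachability

theorem stmt_2_general (p k : ℕ) [Fact p.Prime] (f : (ZMod p)[X]) [Fact (Irreducible f)]
    (hdeg : f.natDegree = k) (hk : 2 ≤ k) :
    let S : Set (AdjoinRoot f) := {s | ∃ i < k, s = AdjoinRoot.root f ^ p ^ i}
    let Adj : AdjoinRoot f → AdjoinRoot f → Prop := fun y z =>
      ∃ s ∈ S, z - y = s ∨ y - z = s ∨ (y ≠ 0 ∧ z = s * y) ∨ (z ≠ 0 ∧ y = s * z)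
    ∀ y z : AdjoinRoot f, Relation.ReflTransGen Adj y z := by
  intro S Adj y z
  have hroot : AdjoinRoot.root f ∈ S := ⟨0, by omega, by simp⟩
  have hreach : ∀ w, ReflTransGen Adj 0 w :=
    reflTransGen_zero_of_aeval_surjective
      (AdjoinRoot.root_ne_zero_of_two_le_natDegree (hdeg ▸ hk))
      (AdjoinRoot.aeval_root_surjective f)
      (fun w => ⟨_, hroot, .inl (add_sub_cancel_left w _)⟩)
      (fun w hw => ⟨_, hroot, .inr (.inr (.inl ⟨hw, rfl⟩))⟩)
  have : Std.Symm Adj := ⟨fun _ _ ⟨s, hs, h⟩ => ⟨s, hs, by tauto⟩⟩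
  exact (Std.Symm.symm _ _ (hreach y)).trans (hreach z)

/-- If `k ≥ 2`, the undirected graph `X_f` is connected. -/
theorem stmt_2 (p k : ℕ) [Fact p.Prime] (f : (ZMod p)[X]) [Fact (Irreducible f)]
    (hmonic : f.Monic) (hdeg : f.natDegree = k) (hk : 2 ≤ k) :
    let S : Set (AdjoinRoot f) := {s | ∃ i < k, s = AdjoinRoot.root f ^ p ^ i}
    let Adj : AdjoinRoot f → AdjoinRoot f → Prop := fun y z =>
      ∃ s ∈ S, z - y = s ∨ y - z = s ∨ (y ≠ 0 ∧ z = s * y) ∨ (z ≠ 0 ∧ y = s * z)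
    ∀ y z : AdjoinRoot f, Relation.ReflTransGen Adj y z :=
  stmt_2_general p k f hdeg hk
end

section
/- If k ≥ 2, the directed graph X⃗_f is strongly connected: for every pair of vertices y, z ∈ K_f there is a finite sequence of vertices starting at y and ending at z in which each consecutive pair is joined by a directed edge of X⃗_f in the forward direction. -/
/-!
Only the edges `y → y + ξ` and `y → y ξ` are needed. Repeating the first one `c` times adds
`c ξ` for any `c ∈ 𝔽_p`, so `k` rounds of "multiply by `ξ`, then add `c_i ξ`" (Horner's scheme)
lead from `y` to `y ξ^k + q(ξ) ξ` for any polynomial `q` of degree `< k`. Since `1, ξ, …, ξ^(k-1)`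
is a basis of `K_f` and `ξ ≠ 0` (because `deg f ≥ 2`), every `z` has this form with
`q(ξ) = (z - y ξ^k) / ξ`.
-/

open Polynomial Relation

theorem reflTransGen_add_nsmul {M : Type*} [AddMonoid M] {r : M → M → Prop} {ξ : M}
    (hadd : ∀ x, r x (x + ξ)) (x : M) (n : ℕ) : ReflTransGen r x (x + n • ξ) := by
  induction n with
  | zero => rw [zero_nsmul, add_zero]
  | succ n ih => simpa [succ_nsmul, add_assoc] using ih.tail (hadd _)

theorem reflTransGen_add_zmod_smul {n : ℕ} [NeZero n] {M : Type*} [AddCommGroup M]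
    [Module (ZMod n) M] {r : M → M → Prop} {ξ : M} (hadd : ∀ x, r x (x + ξ)) (x : M)
    (c : ZMod n) : ReflTransGen r x (x + c • ξ) := by
  simpa only [← Nat.cast_smul_eq_nsmul (ZMod n), ZMod.natCast_zmod_val] using
    reflTransGen_add_nsmul hadd x c.val

theorem reflTransGen_horner {R A : Type*} [CommSemiring R] [CommSemiring A]
    [Algebra R A] {r : A → A → Prop} {ξ : A}
    (hadd : ∀ x (c : R), ReflTransGen r x (x + c • ξ)) (hmul : ∀ x, ReflTransGen r x (x * ξ))
    (x : A) (n : ℕ) (q : R[X]) (hq : q.natDegree ≤ n) :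
    ReflTransGen r x (x * ξ ^ n + aeval ξ q * ξ) := by
  induction n generalizing q with
  | zero =>
    rw [eq_C_of_natDegree_le_zero hq]
    simpa [Algebra.smul_def] using hadd x (q.coeff 0)
  | succ n ih =>
    have hdivX : q.divX.natDegree ≤ n := by
      rw [natDegree_divX_eq_natDegree_tsub_one]
      omega
    have hstep := ((ih q.divX hdivX).trans (hmul _)).trans (hadd _ (q.coeff 0))
    convert hstep using 1
    conv_lhs => rw [← divX_mul_X_add q]
    simp only [map_add, map_mul, aeval_X, aeval_C, Algebra.smul_def, pow_succ]
    ring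

theorem AdjoinRoot.root_ne_zero_of_one_lt_natDegree {R : Type*} [CommRing R] [IsDomain R]
    {f : R[X]} (hf : 1 < f.natDegree) : AdjoinRoot.root f ≠ 0 := by
  intro h
  rw [← AdjoinRoot.mk_X, AdjoinRoot.mk_eq_zero] at h
  have := natDegree_le_of_dvd h X_ne_zero
  rw [natDegree_X] at this
  omega

theorem stmt_3_general (p k : ℕ) [Fact p.Prime] (f : (ZMod p)[X]) [Fact (Irreducible f)]
    (hdeg : f.natDegree = k) (hk : 2 ≤ k) :
    let S : Set (AdjoinRoot f) := {s | ∃ i < k, s = AdjoinRoot.root f ^ p ^ i}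
    let DAdj : AdjoinRoot f → AdjoinRoot f → Prop := fun y z =>
      ∃ s ∈ S, z - y = s ∨ (y ≠ 0 ∧ z * y⁻¹ = s)
    ∀ y z : AdjoinRoot f, Relation.ReflTransGen DAdj y z := by
  intro S DAdj y z
  set ξ := AdjoinRoot.root f
  have hξS : ξ ∈ S := ⟨0, by omega, by rw [pow_zero, pow_one]⟩
  have hξ : ξ ≠ 0 := AdjoinRoot.root_ne_zero_of_one_lt_natDegree (by omega)
  have hadd (x : AdjoinRoot f) : DAdj x (x + ξ) := ⟨ξ, hξS, .inl (add_sub_cancel_left x ξ)⟩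
  have hmul (x : AdjoinRoot f) : ReflTransGen DAdj x (x * ξ) := by
    by_cases hx : x = 0
    · rw [hx, zero_mul]
    · exact .single ⟨ξ, hξS, .inr ⟨hx, by rw [← div_eq_mul_inv, mul_div_cancel_left₀ ξ hx]⟩⟩
  let pb := AdjoinRoot.powerBasis (Fact.out : Irreducible f).ne_zero
  obtain ⟨q, hq, hqz⟩ := pb.exists_eq_aeval ((z - y * ξ ^ k) * ξ⁻¹)
  rw [AdjoinRoot.powerBasis_dim, hdeg] at hq
  rw [AdjoinRoot.powerBasis_gen] at hqz
  have hyz := reflTransGen_horner (reflTransGen_add_zmod_smul hadd) hmul y k q hq.le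
  rwa [← hqz, inv_mul_cancel_right₀ hξ, add_sub_cancel] at hyz

/-- If `k ≥ 2`, the directed graph `X⃗_f` is strongly connected. -/
theorem stmt_3 (p k : ℕ) [Fact p.Prime] (f : (ZMod p)[X]) [Fact (Irreducible f)]
    (hmonic : f.Monic) (hdeg : f.natDegree = k) (hk : 2 ≤ k) :
    let S : Set (AdjoinRoot f) := {s | ∃ i < k, s = AdjoinRoot.root f ^ p ^ i}
    let DAdj : AdjoinRoot f → AdjoinRoot f → Prop := fun y z =>
      ∃ s ∈ S, z - y = s ∨ (y ≠ 0 ∧ z * y⁻¹ = s)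
    ∀ y z : AdjoinRoot f, Relation.ReflTransGen DAdj y z :=
  stmt_3_general p k f hdeg hk
end

section
/- If k ≥ 2, the diameter of X_f is less than 2p(2k+1) − 2k − 4: for all y, z ∈ K_f there exist n < 2p(2k+1) − 2k − 4 and a sequence c_0 = y, c_1, …, c_n = z of vertices with c_i adjacent to c_{i+1} in X_f for all i. -/
/-!
Every `z ∈ K_f` can be written as `ξ · ∑_{i<k} b_i ξ^i` with digits `0 ≤ b_i < p`, and Horner's
scheme reaches it from `0` in at most `kp` steps using only the edges `u — u + ξ` and
`u — ξu`; the latter are genuine edges because `ξ ∉ 𝔽_p` when `k ≥ 2`. Passing through `0`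
joins any two vertices by a walk of length at most `2kp < 2p(2k+1) − 2k − 4`.
-/

open Polynomial

def addMulGraph {K : Type*} [Field K] (S : Set K) : SimpleGraph K :=
  SimpleGraph.fromRel fun y z => ∃ s ∈ S, z - y = s ∨ (y ≠ 0 ∧ z = s * y)

namespace addMulGraph

variable {K : Type*} [Field K] {S : Set K} {ξ : K}

lemma adj_iff {y z : K} : (addMulGraph S).Adj y z ↔ y ≠ z ∧
    ∃ s ∈ S, z - y = s ∨ y - z = s ∨ (y ≠ 0 ∧ z = s * y) ∨ (z ≠ 0 ∧ y = s * z) := by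
  simp only [addMulGraph, SimpleGraph.fromRel_adj]
  constructor
  · rintro ⟨hne, ⟨s, hs, h⟩ | ⟨s, hs, h⟩⟩ <;> exact ⟨hne, s, hs, by tauto⟩
  · rintro ⟨hne, s, hs, h | h | h | h⟩
    exacts [⟨hne, .inl ⟨s, hs, .inl h⟩⟩, ⟨hne, .inr ⟨s, hs, .inl h⟩⟩,
      ⟨hne, .inl ⟨s, hs, .inr h⟩⟩, ⟨hne, .inr ⟨s, hs, .inr h⟩⟩]

lemma adj_add_right (hξ : ξ ∈ S) (hξ0 : ξ ≠ 0) (y : K) : (addMulGraph S).Adj y (y + ξ) :=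
  (SimpleGraph.fromRel_adj _ _ _).2
    ⟨by simpa using hξ0, .inl ⟨ξ, hξ, .inl (add_sub_cancel_left y ξ)⟩⟩

lemma adj_mul_left (hξ : ξ ∈ S) (hξ1 : ξ ≠ 1) {y : K} (hy : y ≠ 0) :
    (addMulGraph S).Adj y (ξ * y) :=
  (SimpleGraph.fromRel_adj _ _ _).2
    ⟨fun h => hξ1 (by simpa [hy] using h.symm), .inl ⟨ξ, hξ, .inr ⟨hy, rfl⟩⟩⟩

lemma exists_walk_add_nsmul (hξ : ξ ∈ S) (hξ0 : ξ ≠ 0) (y : K) (j : ℕ) :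
    ∃ w : (addMulGraph S).Walk y (y + j • ξ), w.length = j := by
  induction j with
  | zero => exact ⟨SimpleGraph.Walk.nil.copy rfl (by simp), by simp⟩
  | succ j ih =>
    obtain ⟨w, hw⟩ := ih
    refine ⟨(w.concat (adj_add_right hξ hξ0 _)).copy rfl (by rw [succ_nsmul, add_assoc]), ?_⟩
    simp [hw]

/-- Horner's scheme: multiply the current vertex by `ξ`, then add `ξ` as often as the next
digit says. -/
lemma exists_walk_zero_sum_nsmul_pow (hξ : ξ ∈ S) (hξ0 : ξ ≠ 0) (hξ1 : ξ ≠ 1) (b : ℕ → ℕ)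
    (m : ℕ) : ∃ w : (addMulGraph S).Walk 0 (∑ i ∈ Finset.range m, b i • ξ ^ (i + 1)),
      w.length ≤ ∑ i ∈ Finset.range m, (b i + 1) := by
  induction m generalizing b with
  | zero => exact ⟨.nil, by simp⟩
  | succ m ih =>
    set u := ∑ i ∈ Finset.range m, b (i + 1) • ξ ^ (i + 1)
    obtain ⟨w, hw⟩ : ∃ w : (addMulGraph S).Walk 0 u, _ := ih (fun i => b (i + 1))
    have horner : ∑ i ∈ Finset.range (m + 1), b i • ξ ^ (i + 1) = ξ * u + b 0 • ξ := by
      simp only [Finset.sum_range_succ', u, Finset.mul_sum, mul_smul_comm, pow_succ' ξ (_ + 1),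
        zero_add, pow_one]
    rw [horner, Finset.sum_range_succ']
    obtain ⟨w₀, hw₀⟩ := exists_walk_add_nsmul hξ hξ0 (ξ * u) (b 0)
    by_cases hu : u = 0
    · refine ⟨w₀.copy (by simp [hu]) rfl, ?_⟩
      simp only [SimpleGraph.Walk.length_copy, hw₀]
      omega
    · refine ⟨(w.concat (adj_mul_left hξ hξ1 hu)).append w₀, ?_⟩
      simp only [SimpleGraph.Walk.length_append, SimpleGraph.Walk.length_concat, hw₀]
      omega

end addMulGraph

lemma PowerBasis.exists_eq_sum_nsmul_gen_pow_succ {p : ℕ} [NeZero p] {K : Type*} [Field K]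
    [Algebra (ZMod p) K] (pb : PowerBasis (ZMod p) K) (hgen : pb.gen ≠ 0) (z : K) :
    ∃ b : ℕ → ℕ, (∀ i, b i < p) ∧ z = ∑ i ∈ Finset.range pb.dim, b i • pb.gen ^ (i + 1) := by
  obtain ⟨g, hg, hz⟩ := pb.exists_eq_aeval (pb.gen⁻¹ * z)
  refine ⟨fun i => (g.coeff i).val, fun i => ZMod.val_lt _, ?_⟩
  calc z = pb.gen * (pb.gen⁻¹ * z) := (mul_inv_cancel_left₀ hgen z).symm
    _ = pb.gen * ∑ i ∈ Finset.range pb.dim, g.coeff i • pb.gen ^ i := by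
      rw [hz, aeval_eq_sum_range' hg]
    _ = _ := by
      simp only [Finset.mul_sum, mul_smul_comm, ← pow_succ', ← Nat.cast_smul_eq_nsmul (ZMod p),
        ZMod.natCast_zmod_val]

lemma addMulGraph.exists_walk_zero_length_le {p : ℕ} [NeZero p] {K : Type*} [Field K]
    [Algebra (ZMod p) K] (pb : PowerBasis (ZMod p) K) {S : Set K} (hS : pb.gen ∈ S)
    (h0 : pb.gen ≠ 0) (h1 : pb.gen ≠ 1) (z : K) :
    ∃ w : (addMulGraph S).Walk 0 z, w.length ≤ pb.dim * p := by
  obtain ⟨b, hb, rfl⟩ := pb.exists_eq_sum_nsmul_gen_pow_succ h0 z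
  obtain ⟨w, hw⟩ := exists_walk_zero_sum_nsmul_pow hS h0 h1 b pb.dim
  refine ⟨w, hw.trans ?_⟩
  simpa using Finset.sum_le_card_nsmul (Finset.range pb.dim) _ p fun i _ => hb i

lemma AdjoinRoot.root_ne_algebraMap {R : Type*} [CommRing R] [IsDomain R] {f : R[X]}
    (hf : 2 ≤ f.natDegree) (a : R) : root f ≠ algebraMap R (AdjoinRoot f) a := by
  intro h
  have hdvd : f ∣ X - C a := by
    rw [← AdjoinRoot.mk_eq_zero, map_sub, mk_X, mk_C, h, algebraMap_eq, sub_self]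
  have := natDegree_le_of_dvd hdvd (X_sub_C_ne_zero a)
  rw [natDegree_X_sub_C] at this
  omega

theorem stmt_4_general (p k : ℕ) [Fact p.Prime] (f : (ZMod p)[X]) [Fact (Irreducible f)]
    (hdeg : f.natDegree = k) (hk : 2 ≤ k) :
    let S : Set (AdjoinRoot f) := {s | ∃ i < k, s = AdjoinRoot.root f ^ p ^ i}
    let Adj : AdjoinRoot f → AdjoinRoot f → Prop := fun y z =>
      ∃ s ∈ S, z - y = s ∨ y - z = s ∨ (y ≠ 0 ∧ z = s * y) ∨ (z ≠ 0 ∧ y = s * z)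
    ∀ y z : AdjoinRoot f, ∃ n : ℕ, n < 2 * p * (2 * k + 1) - 2 * k - 4 ∧
      ∃ c : ℕ → AdjoinRoot f, c 0 = y ∧ c n = z ∧ ∀ i < n, Adj (c i) (c (i + 1)) := by
  intro S Adj y z
  have hf : f ≠ 0 := by rintro rfl; simp at hdeg; omega
  let pb := AdjoinRoot.powerBasis hf
  have hgen : pb.gen = AdjoinRoot.root f := rfl
  have hroot := AdjoinRoot.root_ne_algebraMap (f := f) (hdeg ▸ hk)
  have reach := addMulGraph.exists_walk_zero_length_le pb (S := S) ⟨0, by omega, by simp [hgen]⟩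
    (by simpa [hgen] using hroot 0) (by simpa [hgen] using hroot 1)
  obtain ⟨wy, hwy⟩ := reach y
  obtain ⟨wz, hwz⟩ := reach z
  let w := wy.reverse.append wz
  refine ⟨w.length, ?_, w.getVert, w.getVert_zero, w.getVert_length,
    fun i hi => (addMulGraph.adj_iff.1 (w.adj_getVert_succ hi)).2⟩
  have hlen : w.length ≤ 2 * (k * p) := by
    simp only [w, SimpleGraph.Walk.length_append, SimpleGraph.Walk.length_reverse]
    have hdim : pb.dim = k := hdeg
    rw [hdim] at hwy hwz
    omega
  have hp : 2 ≤ p := (Fact.out : p.Prime).two_le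
  have hkp : 2 * k ≤ k * p := by nlinarith
  have hexpand : 2 * p * (2 * k + 1) = 4 * (k * p) + 2 * p := by ring
  omega

/-- If `k ≥ 2`, the diameter of `X_f` is less than `2p(2k+1) − 2k − 4`. -/
theorem stmt_4 (p k : ℕ) [Fact p.Prime] (f : (ZMod p)[X]) [Fact (Irreducible f)]
    (hmonic : f.Monic) (hdeg : f.natDegree = k) (hk : 2 ≤ k) :
    let S : Set (AdjoinRoot f) := {s | ∃ i < k, s = AdjoinRoot.root f ^ p ^ i}
    let Adj : AdjoinRoot f → AdjoinRoot f → Prop := fun y z =>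
      ∃ s ∈ S, z - y = s ∨ y - z = s ∨ (y ≠ 0 ∧ z = s * y) ∨ (z ≠ 0 ∧ y = s * z)
    ∀ y z : AdjoinRoot f, ∃ n : ℕ, n < 2 * p * (2 * k + 1) - 2 * k - 4 ∧
      ∃ c : ℕ → AdjoinRoot f, c 0 = y ∧ c n = z ∧ ∀ i < n, Adj (c i) (c (i + 1)) :=
  stmt_4_general p k f hdeg hk
end

section
/- If k ≥ 2, the diameter of the directed graph X⃗_f is at most (p−1)(k² + 4k + 1) + k: for all y, z ∈ K_f there exist n ≤ (p−1)(k² + 4k + 1) + k and a sequence c_0 = y, c_1, …, c_n = z of vertices with a directed edge from c_i to c_{i+1} in X⃗_f for all i. -/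
/-!
Only the conjugate `ξ` itself is needed. The moves `v ↦ ξ * v` and `v ↦ v + ξ` run Horner's
scheme: from `y`, `k` rounds of "multiply by `ξ`, then add `ξ` at most `p - 1` times" reach
`ξ ^ k * y + ∑ i < k, aᵢ ξ ^ (i + 1)` for any coefficients `aᵢ ∈ 𝔽_p`, in at most `k * p` steps.
Since `ξ ≠ 0` and `1, ξ, …, ξ ^ (k - 1)` is a basis, every `z` has this form, and
`k * p ≤ (p - 1)(k² + 4k + 1) + k`.
-/

open Polynomial

def ReachableIn {α : Type*} (R : α → α → Prop) (n : ℕ) (y z : α) : Prop :=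
  ∃ m ≤ n, ∃ c : ℕ → α, c 0 = y ∧ c m = z ∧ ∀ i < m, R (c i) (c (i + 1))

namespace ReachableIn

variable {α : Type*} {R : α → α → Prop} {m n : ℕ} {x y z : α}

theorem refl (n : ℕ) (y : α) : ReachableIn R n y y :=
  ⟨0, n.zero_le, fun _ => y, rfl, rfl, by simp⟩

theorem single (h : R y z) : ReachableIn R 1 y z :=
  ⟨1, le_rfl, fun i => if i = 0 then y else z, rfl, rfl, by
    intro i hi
    obtain rfl : i = 0 := by omega
    simpa using h⟩

theorem mono (h : ReachableIn R m y z) (hmn : m ≤ n) : ReachableIn R n y z :=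
  let ⟨l, hl, hc⟩ := h
  ⟨l, hl.trans hmn, hc⟩

theorem trans (hxy : ReachableIn R m x y) (hyz : ReachableIn R n y z) :
    ReachableIn R (m + n) x z := by
  obtain ⟨l₁, hl₁, c₁, hc₁0, hc₁l, hc₁⟩ := hxy
  obtain ⟨l₂, hl₂, c₂, hc₂0, hc₂l, hc₂⟩ := hyz
  have hjoin : c₁ l₁ = c₂ 0 := hc₁l.trans hc₂0.symm
  refine ⟨l₁ + l₂, by omega, fun i => if i ≤ l₁ then c₁ i else c₂ (i - l₁), by simp [hc₁0],
    ?_, ?_⟩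
  · rcases l₂.eq_zero_or_pos with rfl | hpos
    · simp [hjoin, hc₂l]
    · simp [show ¬l₁ + l₂ ≤ l₁ by omega, hc₂l]
  · intro i hi
    by_cases hlt : i < l₁
    · simpa [hlt.le, show i + 1 ≤ l₁ from hlt] using hc₁ i hlt
    · have hstep := hc₂ (i - l₁) (by omega)
      rw [show i - l₁ + 1 = i + 1 - l₁ by omega] at hstep
      by_cases heq : i = l₁
      · subst heq
        simpa [hjoin] using hstep
      · simpa [show ¬i ≤ l₁ by omega, show ¬i + 1 ≤ l₁ by omega] using hstep

end ReachableIn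

theorem PowerBasis.gen_ne_zero {K L : Type*} [CommRing K] [Nontrivial K] [Ring L] [Algebra K L]
    (pb : PowerBasis K L) (hdim : 1 < pb.dim) : pb.gen ≠ 0 := by
  simpa [pb.basis_eq_pow] using pb.basis.ne_zero ⟨1, hdim⟩

theorem PowerBasis.exists_eq_sum_smul_gen_pow_succ {K L : Type*} [CommRing K] [Field L]
    [Algebra K L] (pb : PowerBasis K L) (hgen : pb.gen ≠ 0) (x : L) :
    ∃ a : Fin pb.dim → K, x = ∑ i, a i • pb.gen ^ ((i : ℕ) + 1) := by
  refine ⟨pb.basis.repr (x * pb.gen⁻¹), ?_⟩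
  simp_rw [pow_succ, ← smul_mul_assoc, ← Finset.sum_mul, ← pb.basis_eq_pow, pb.basis.sum_repr,
    inv_mul_cancel_right₀ hgen]

section Horner

variable {A : Type*} [CommRing A] {q : ℕ} [NeZero q] [Algebra (ZMod q) A]
  {R : A → A → Prop} {ξ : A}

theorem reachableIn_add_nsmul (hadd : ∀ v, R v (v + ξ)) (v : A) (m : ℕ) :
    ReachableIn R m v (v + m • ξ) := by
  induction m with
  | zero => simpa using ReachableIn.refl 0 v
  | succ m ih => simpa only [succ_nsmul, add_assoc] using ih.trans (.single (hadd _))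

theorem reachableIn_mul_add_smul (hadd : ∀ v, R v (v + ξ)) (hmul : ∀ v ≠ 0, R v (ξ * v))
    (v : A) (a : ZMod q) : ReachableIn R q v (ξ * v + a • ξ) := by
  have hmul' : ReachableIn R 1 v (ξ * v) := by
    by_cases hv : v = 0
    · simpa [hv] using ReachableIn.refl 1 (0 : A)
    · exact .single (hmul v hv)
  have hval : a.val • ξ = a • ξ := by
    rw [← Nat.cast_smul_eq_nsmul (ZMod q), ZMod.natCast_zmod_val]
  have hstep := hmul'.trans (reachableIn_add_nsmul hadd (ξ * v) a.val)
  rw [hval] at hstep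
  exact hstep.mono (by have := a.val_lt; omega)

theorem reachableIn_horner (hadd : ∀ v, R v (v + ξ)) (hmul : ∀ v ≠ 0, R v (ξ * v)) (y : A)
    (t : ℕ) (a : Fin t → ZMod q) :
    ReachableIn R (t * q) y (ξ ^ t * y + ∑ i, a i • ξ ^ ((i : ℕ) + 1)) := by
  induction t with
  | zero => simpa using ReachableIn.refl 0 y
  | succ t ih =>
    -- Horner: the lowest coefficient is added last, after the final multiplication by `ξ`.
    have hlast : ξ ^ (t + 1) * y + ∑ i, a i • ξ ^ ((i : ℕ) + 1) =
        ξ * (ξ ^ t * y + ∑ i : Fin t, a i.succ • ξ ^ ((i : ℕ) + 1)) + a 0 • ξ := by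
      simp only [Fin.sum_univ_succ, Fin.val_succ, Fin.val_zero, mul_add, Finset.mul_sum,
        mul_smul_comm, ← pow_succ', zero_add, pow_one]
      ring
    rw [hlast, add_one_mul]
    exact (ih _).trans (reachableIn_mul_add_smul hadd hmul _ (a 0))

end Horner

theorem stmt_5_general (p k : ℕ) [Fact p.Prime] (f : (ZMod p)[X]) [Fact (Irreducible f)]
    (hdeg : f.natDegree = k) (hk : 2 ≤ k) :
    let S : Set (AdjoinRoot f) := {s | ∃ i < k, s = AdjoinRoot.root f ^ p ^ i}
    let DAdj : AdjoinRoot f → AdjoinRoot f → Prop := fun y z =>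
      ∃ s ∈ S, z - y = s ∨ (y ≠ 0 ∧ z * y⁻¹ = s)
    ∀ y z : AdjoinRoot f, ∃ n : ℕ, n ≤ (p - 1) * (k ^ 2 + 4 * k + 1) + k ∧
      ∃ c : ℕ → AdjoinRoot f, c 0 = y ∧ c n = z ∧ ∀ i < n, DAdj (c i) (c (i + 1)) := by
  intro S DAdj y z
  subst hdeg
  have : NeZero p := ⟨(Fact.out : p.Prime).ne_zero⟩
  let pb := AdjoinRoot.powerBasis (Fact.out : Irreducible f).ne_zero
  have hξS : AdjoinRoot.root f ∈ S := ⟨0, by omega, by simp⟩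
  have hadd : ∀ v, DAdj v (v + AdjoinRoot.root f) := fun v => ⟨_, hξS, .inl (by simp)⟩
  have hmul : ∀ v ≠ 0, DAdj v (AdjoinRoot.root f * v) := fun v hv =>
    ⟨_, hξS, .inr ⟨hv, mul_inv_cancel_right₀ hv _⟩⟩
  obtain ⟨a, ha⟩ : ∃ a : Fin f.natDegree → ZMod p, z - AdjoinRoot.root f ^ f.natDegree * y =
      ∑ i, a i • AdjoinRoot.root f ^ ((i : ℕ) + 1) :=
    pb.exists_eq_sum_smul_gen_pow_succ (pb.gen_ne_zero hk) _
  have hreach := reachableIn_horner hadd hmul y f.natDegree a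
  rw [← ha, add_sub_cancel] at hreach
  refine hreach.mono ?_
  obtain ⟨q, rfl⟩ := Nat.exists_eq_add_one_of_ne_zero (NeZero.ne p)
  simp only [add_tsub_cancel_right]
  nlinarith

/-- If `k ≥ 2`, the diameter of the directed graph `X⃗_f` is at most
`(p−1)(k² + 4k + 1) + k`. -/
theorem stmt_5 (p k : ℕ) [Fact p.Prime] (f : (ZMod p)[X]) [Fact (Irreducible f)]
    (hmonic : f.Monic) (hdeg : f.natDegree = k) (hk : 2 ≤ k) :
    let S : Set (AdjoinRoot f) := {s | ∃ i < k, s = AdjoinRoot.root f ^ p ^ i}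
    let DAdj : AdjoinRoot f → AdjoinRoot f → Prop := fun y z =>
      ∃ s ∈ S, z - y = s ∨ (y ≠ 0 ∧ z * y⁻¹ = s)
    ∀ y z : AdjoinRoot f, ∃ n : ℕ, n ≤ (p - 1) * (k ^ 2 + 4 * k + 1) + k ∧
      ∃ c : ℕ → AdjoinRoot f, c 0 = y ∧ c n = z ∧ ∀ i < n, DAdj (c i) (c (i + 1)) :=
  stmt_5_general p k f hdeg hk
end

section
/- The graphs associated to the fields F_3[x]/(x² + x + 2) and F_3[t]/(t² + 2t + 2) are isomorphic: there exists a bijection φ from (Z/3Z)[x]/(x²+x+2) to (Z/3Z)[t]/(t²+2t+2) such that y and z are adjacent in the first graph if and only if φ(y) and φ(z) are adjacent in the second graph. -/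
/-!
Since `t² + 2t + 2 = (−t)² + (−t) + 2` over `𝔽₃`, the map `ξ ↦ −ρ` (with `ρ` the class of `t`)
is a ring isomorphism `φ`, and it carries `S₁ = {ξ, ξ³}` onto `−S₂`. Replacing the connection set
`S₂` by `−S₂` does not change the graph: the additive relations are symmetric under `s ↦ −s`, and
`ρ · ρ³ = ρ⁴ = −1` (as `t⁴ + 1 = (t² + 2t + 2)(t² + t + 2)` over `𝔽₃`), so `z = −s · y` for one
element `s` of `S₂` exactly when `y = s' · z` for the other one `s'`.
-/

open Polynomial

namespace AdjoinRoot

variable {R : Type*} [CommRing R]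

lemma eval₂_neg_root_eq_zero {f g : R[X]} (h : f.comp (-X) = g) :
    f.eval₂ (of g) (-root g) = 0 := by
  rw [← comp_neg_X_comp_neg_X f, h, eval₂_comp]
  simp

noncomputable def negRootEquiv (f g : R[X]) (h : f.comp (-X) = g) :
    AdjoinRoot f ≃+* AdjoinRoot g :=
  have h' : g.comp (-X) = f := by rw [← h, comp_neg_X_comp_neg_X]
  RingEquiv.ofRingHom (lift (of g) (-root g) (eval₂_neg_root_eq_zero h))
    (lift (of f) (-root f) (eval₂_neg_root_eq_zero h'))
    (ringHom_ext (by ext; simp) (by simp)) (ringHom_ext (by ext; simp) (by simp))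

@[simp]
lemma negRootEquiv_root (f g : R[X]) (h : f.comp (-X) = g) :
    negRootEquiv f g h (root f) = -root g :=
  lift_root (eval₂_neg_root_eq_zero h)

end AdjoinRoot

def shiftAdj {R : Type*} [Ring R] (S : Set R) (y z : R) : Prop :=
  ∃ s ∈ S, z - y = s ∨ y - z = s ∨ (y ≠ 0 ∧ z = s * y) ∨ (z ≠ 0 ∧ y = s * z)

lemma shiftAdj_image_iff {R R' : Type*} [Ring R] [Ring R'] (e : R ≃+* R') (S : Set R)
    (y z : R) : shiftAdj (e '' S) (e y) (e z) ↔ shiftAdj S y z := by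
  simp only [shiftAdj, Set.mem_image, exists_exists_and_eq_and, ← map_sub, ← map_mul,
    e.injective.eq_iff, ne_eq, map_eq_zero_iff e e.injective]

lemma ne_zero_and_eq_neg_mul_iff {R : Type*} [CommRing R] {s t y z : R} (hst : s * t = -1) :
    (y ≠ 0 ∧ z = -s * y) ↔ (z ≠ 0 ∧ y = t * z) := by
  have key : ∀ {s t y z : R}, s * t = -1 → y ≠ 0 → z = -s * y → z ≠ 0 ∧ y = t * z := by
    intro s t y z hst hy hz
    have hy' : y = t * z := by linear_combination (-t) * hz + y * hst
    exact ⟨fun hz0 => hy (by rw [hy', hz0, mul_zero]), hy'⟩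
  refine ⟨fun ⟨hy, hz⟩ => key hst hy hz, fun ⟨hz, hy⟩ => ?_⟩
  exact key (s := -t) (t := -s) (by linear_combination hst) hz (by rw [hy, neg_neg])

lemma shiftAdj_neg_iff {R : Type*} [CommRing R] {S : Set R}
    (hS : ∀ s ∈ S, ∃ t ∈ S, s * t = -1) (y z : R) :
    shiftAdj (-S) y z ↔ shiftAdj S y z := by
  simp only [shiftAdj, Set.mem_neg, Set.exists_neg_mem]
  constructor
  · rintro ⟨s, hs, h | h | h | h⟩
    · exact ⟨s, hs, .inr (.inl (by linear_combination -h))⟩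
    · exact ⟨s, hs, .inl (by linear_combination -h)⟩
    all_goals obtain ⟨t, ht, hst⟩ := hS s hs
    · exact ⟨t, ht, .inr (.inr (.inr ((ne_zero_and_eq_neg_mul_iff hst).1 h)))⟩
    · exact ⟨t, ht, .inr (.inr (.inl ((ne_zero_and_eq_neg_mul_iff hst).1 h)))⟩
  · rintro ⟨s, hs, h | h | h | h⟩
    · exact ⟨s, hs, .inr (.inl (by linear_combination -h))⟩
    · exact ⟨s, hs, .inl (by linear_combination -h)⟩
    all_goals obtain ⟨t, ht, hst⟩ := hS s hs
    · exact ⟨t, ht, .inr (.inr (.inr ((ne_zero_and_eq_neg_mul_iff (by rwa [mul_comm])).2 h)))⟩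
    · exact ⟨t, ht, .inr (.inr (.inl ((ne_zero_and_eq_neg_mul_iff (by rwa [mul_comm])).2 h)))⟩

lemma setOf_exists_lt_two_eq_pow_pow {M : Type*} [Monoid M] (a : M) (p : ℕ) :
    {s | ∃ i < 2, s = a ^ p ^ i} = {a, a ^ p} := by
  ext s
  simp [Nat.le_one_iff_eq_zero_or_eq_one, or_and_right, exists_or, eq_comm]

lemma zmod3_comp_neg_X : (X ^ 2 + X + C 2 : (ZMod 3)[X]).comp (-X) = X ^ 2 + 2 * X + C 2 := by
  simp only [add_comp, pow_comp, X_comp, C_comp]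
  linear_combination (-X) * (CharP.cast_eq_zero (ZMod 3)[X] 3)

lemma zmod3_X_pow_four_add_one :
    (X ^ 4 + 1 : (ZMod 3)[X]) = (X ^ 2 + 2 * X + C 2) * (X ^ 2 + X + C 2) := by
  rw [C_ofNat]
  linear_combination (-(X ^ 3 + 2 * X ^ 2 + 2 * X + 1)) * (CharP.cast_eq_zero (ZMod 3)[X] 3)

/-- The graphs associated to the fields `F₃[x]/(x² + x + 2)` and `F₃[t]/(t² + 2t + 2)`
are isomorphic. -/
theorem stmt_10 :
    let f : (ZMod 3)[X] := X ^ 2 + X + C 2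
    let g : (ZMod 3)[X] := X ^ 2 + 2 * X + C 2
    let S₁ : Set (AdjoinRoot f) := {s | ∃ i < 2, s = AdjoinRoot.root f ^ 3 ^ i}
    let S₂ : Set (AdjoinRoot g) := {s | ∃ i < 2, s = AdjoinRoot.root g ^ 3 ^ i}
    let Adj₁ : AdjoinRoot f → AdjoinRoot f → Prop := fun y z =>
      ∃ s ∈ S₁, z - y = s ∨ y - z = s ∨ (y ≠ 0 ∧ z = s * y) ∨ (z ≠ 0 ∧ y = s * z)
    let Adj₂ : AdjoinRoot g → AdjoinRoot g → Prop := fun y z =>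
      ∃ s ∈ S₂, z - y = s ∨ y - z = s ∨ (y ≠ 0 ∧ z = s * y) ∨ (z ≠ 0 ∧ y = s * z)
    ∃ φ : AdjoinRoot f ≃ AdjoinRoot g,
      ∀ y z : AdjoinRoot f, Adj₁ y z ↔ Adj₂ (φ y) (φ z) := by
  intro f g S₁ S₂ Adj₁ Adj₂
  have hρ : AdjoinRoot.root g * AdjoinRoot.root g ^ 3 = -1 := by
    have := AdjoinRoot.mk_eq_zero.2 (Dvd.intro f zmod3_X_pow_four_add_one.symm)
    rw [map_add, map_pow, AdjoinRoot.mk_X, map_one] at this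
    linear_combination this
  set φ := AdjoinRoot.negRootEquiv f g zmod3_comp_neg_X with hφ
  have hS₁ : φ '' S₁ = -S₂ := by
    simp only [S₁, S₂, setOf_exists_lt_two_eq_pow_pow, Set.image_pair, map_pow,
      hφ, AdjoinRoot.negRootEquiv_root, Set.neg_insert, Set.neg_singleton,
      Odd.neg_pow (by decide : Odd 3)]
  have hS₂ : ∀ s ∈ S₂, ∃ t ∈ S₂, s * t = -1 := by
    simp only [S₂, setOf_exists_lt_two_eq_pow_pow]
    rintro s (rfl | rfl)
    exacts [⟨_, .inr rfl, hρ⟩, ⟨_, .inl rfl, by rwa [mul_comm]⟩]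
  refine ⟨φ.toEquiv, fun y z => ?_⟩
  change shiftAdj S₁ y z ↔ shiftAdj S₂ (φ y) (φ z)
  rw [← shiftAdj_neg_iff hS₂, ← hS₁, shiftAdj_image_iff]
end

section
/- Let p be a prime with p ≡ 3 (mod 4) and let l be an integer with 1 ≤ l ≤ p − 1. Define g : (Z/pZ) × (Z/pZ) → ℝ by g(v, w) = 4·cos(2π·l·v̄/p)·cos(2π·l·w̄/p), where v̄, w̄ ∈ {0, 1, …, p−1} are the representatives of v, w. Then g is an eigenfunction of the graph Laplacian of X_f with eigenvalue 8·sin²(π·l/p): for all v, w ∈ Z/pZ, 8·g(v,w) − 2·g(v, w+1) − 2·g(v, w−1) − 2·g(−w, v) − 2·g(w, −v) = 8·sin²(π·l/p)·g(v,w). -/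
open Real

/-!
Writing `c x = cos (2π l x̄ / p)`, the function `c` is `p`-periodic in the representative, hence
even on `ZMod p`, and satisfies `c (x + 1) + c (x - 1) = 2 cos (2π l / p) c x`.
Since `g (v, w) = 4 c v c w`, the two rotated neighbours both contribute `4 c v c w`, and the
Laplacian multiplies `g` by `4 - 2 cos (2π l / p) - 2 = 8 sin² (π l / p)`.
-/

namespace ZMod

/-- The real part of the additive character `x ↦ exp (2π i l x / p)` of `ZMod p`. -/
noncomputable def cosChar (p : ℕ) (l : ℤ) (x : ZMod p) : ℝ :=
  cos (2 * π * l * x.val / p)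

variable {p : ℕ} [NeZero p] (l : ℤ)

theorem cosChar_intCast (n : ℤ) : cosChar p l n = cos (2 * π * l * n / p) := by
  have hp : (p : ℝ) ≠ 0 := Nat.cast_ne_zero.mpr (NeZero.ne p)
  have hval : ((n : ZMod p).val : ℝ) = (n % p : ℤ) := by exact_mod_cast val_intCast n
  have hdiv : (n : ℝ) = (n % p : ℤ) + p * (n / p : ℤ) := by
    exact_mod_cast (Int.emod_add_mul_ediv n p).symm
  have hangle :
      2 * π * l * n / p = 2 * π * l * (n % p : ℤ) / p + (l * (n / p) : ℤ) * (2 * π) := by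
    rw [hdiv]; push_cast; field_simp
  rw [cosChar, hval, hangle, cos_add_int_mul_two_pi]

theorem cosChar_eq (x : ZMod p) : cosChar p l x = cos (2 * π * l * (x.val : ℤ) / p) := by
  rw [← cosChar_intCast, Int.cast_natCast, natCast_zmod_val]

theorem cosChar_neg (x : ZMod p) : cosChar p l (-x) = cosChar p l x := by
  have hx : ((-x.val : ℤ) : ZMod p) = -x := by
    rw [Int.cast_neg, Int.cast_natCast, natCast_zmod_val]
  rw [← hx, cosChar_intCast, cosChar_eq, Int.cast_neg, mul_neg, neg_div, cos_neg]

theorem cosChar_add_one_add_cosChar_sub_one (x : ZMod p) :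
    cosChar p l (x + 1) + cosChar p l (x - 1) = 2 * cos (2 * π * l / p) * cosChar p l x := by
  have hplus : ((x.val + 1 : ℤ) : ZMod p) = x + 1 := by
    rw [Int.cast_add, Int.cast_natCast, natCast_zmod_val, Int.cast_one]
  have hminus : ((x.val - 1 : ℤ) : ZMod p) = x - 1 := by
    rw [Int.cast_sub, Int.cast_natCast, natCast_zmod_val, Int.cast_one]
  rw [← hplus, ← hminus, cosChar_intCast, cosChar_intCast, cosChar_eq, cos_add_cos]
  push_cast
  ring_nf

end ZMod

theorem stmt_11_general (p : ℕ) [Fact p.Prime]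
    (l : ℕ)
    (g : ZMod p → ZMod p → ℝ)
    (hg : ∀ v w : ZMod p, g v w =
      4 * Real.cos (2 * Real.pi * l * (v.val : ℝ) / p) *
        Real.cos (2 * Real.pi * l * (w.val : ℝ) / p)) :
    ∀ v w : ZMod p,
      8 * g v w - 2 * g v (w + 1) - 2 * g v (w - 1) - 2 * g (-w) v - 2 * g w (-v)
        = 8 * Real.sin (Real.pi * l / p) ^ 2 * g v w := by
  intro v w
  have hg_cosChar (x y : ZMod p) : g x y = 4 * ZMod.cosChar p l x * ZMod.cosChar p l y := by
    simp only [hg, ZMod.cosChar, Int.cast_natCast]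
  have hneighbours := ZMod.cosChar_add_one_add_cosChar_sub_one (p := p) l w
  have hcos : cos (2 * π * l / p) = 1 - 2 * sin (π * l / p) ^ 2 := by
    rw [← cos_two_mul_eq_one_sub]; ring_nf
  simp only [hg_cosChar, ZMod.cosChar_neg]
  push_cast at hneighbours
  linear_combination (-8 * ZMod.cosChar p l v) * hneighbours
    + (-16 * ZMod.cosChar p l v * ZMod.cosChar p l w) * hcos

/-- For a prime `p ≡ 3 (mod 4)` and `1 ≤ l ≤ p − 1`, the function
`g(v, w) = 4·cos(2πl·v̄/p)·cos(2πl·w̄/p)` is an eigenfunction of the graph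
Laplacian of `X_f` for `F_p[x]/(x²+1)` with eigenvalue `8·sin²(πl/p)`. -/
theorem stmt_11 (p : ℕ) [Fact p.Prime] (hp : p % 4 = 3)
    (l : ℕ) (hl1 : 1 ≤ l) (hl2 : l ≤ p - 1)
    (g : ZMod p → ZMod p → ℝ)
    (hg : ∀ v w : ZMod p, g v w =
      4 * Real.cos (2 * Real.pi * l * (v.val : ℝ) / p) *
        Real.cos (2 * Real.pi * l * (w.val : ℝ) / p)) :
    ∀ v w : ZMod p,
      8 * g v w - 2 * g v (w + 1) - 2 * g v (w - 1) - 2 * g (-w) v - 2 * g w (-v)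
        = 8 * Real.sin (Real.pi * l / p) ^ 2 * g v w :=
  stmt_11_general p l g hg
end

section
/- For every prime p with p ≡ 3 (mod 4), the graph Laplacian of the graph of F_p[x]/(x²+1) has a nonzero eigenfunction orthogonal to the constants whose eigenvalue is at most 8π²/p²: there exists g : (Z/pZ) × (Z/pZ) → ℝ with g not identically zero, with ∑_{v,w} g(v,w) = 0, such that for all v, w ∈ Z/pZ, 8·g(v,w) − 2·g(v, w+1) − 2·g(v, w−1) − 2·g(−w, v) − 2·g(w, −v) = 8·sin²(π/p)·g(v,w), and 8·sin²(π/p) ≤ 8π²/p². In particular the first nontrivial Laplace eigenvalue λ₁ tends to 0 as p → ∞, so this family of graphs is not an expander. -/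
/-!
The eigenfunction is `g v w = c v * c w` with `c w = cos (2πw/p)`. Since `c` is even, the two
rotation terms of the Laplacian both contribute `-2 c v c w`, while the two translation terms give
`-2 c v (c (w + 1) + c (w - 1)) = -4 cos (2π/p) c v c w`; the eigenvalue is therefore
`4 - 4 cos (2π/p) = 8 sin² (π/p) ≤ 8π²/p²`. Orthogonality to the constants follows from the
same three-term recurrence: summing it over `ZMod p` gives `2 ∑ c = 2 cos (2π/p) ∑ c`.
-/

open Real

theorem Fintype.sum_eq_zero_of_add_add_sub_eq_mul {G K : Type*} [AddCommGroup G] [Fintype G]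
    [CommRing K] [IsDomain K] {f : G → K} (t : G) {μ : K} (hμ : μ ≠ 2)
    (hf : ∀ w, f (w + t) + f (w - t) = μ * f w) : ∑ w, f w = 0 := by
  have hshift : ∀ s : G, ∑ w, f (w + s) = ∑ w, f w := fun s =>
    Fintype.sum_equiv (Equiv.addRight s) _ _ fun _ => rfl
  have h : 2 * ∑ w, f w = μ * ∑ w, f w := by
    simpa only [Finset.sum_add_distrib, sub_eq_add_neg, hshift, ← Finset.mul_sum, two_mul]
      using Finset.sum_congr rfl fun w (_ : w ∈ Finset.univ) => hf w
  exact (mul_left_injective₀ (sub_ne_zero.2 hμ)).eq_iff.1 <| by linear_combination -h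

namespace ZMod

/-- `j ↦ 2πj/n`, well defined modulo `2π`. -/
noncomputable def toAngle (n : ℕ) : ZMod n →+ Real.Angle :=
  ZMod.lift n ⟨zmultiplesHom Real.Angle ↑(2 * π / n), by
    rw [zmultiplesHom_apply, ← Real.Angle.coe_zsmul, zsmul_eq_mul, Int.cast_natCast]
    rcases eq_or_ne (n : ℝ) 0 with hn | hn
    · simp [hn]
    · rw [mul_div_cancel₀ _ hn, Real.Angle.coe_two_pi]⟩

theorem toAngle_one (n : ℕ) : toAngle n 1 = ↑(2 * π / n) := by
  rw [← Int.cast_one, toAngle, ZMod.lift_coe]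
  simp

theorem cos_toAngle_add_add_sub (n : ℕ) (w : ZMod n) :
    (toAngle n (w + 1)).cos + (toAngle n (w - 1)).cos
      = 2 * Real.cos (2 * π / n) * (toAngle n w).cos := by
  rw [map_add, map_sub, sub_eq_add_neg (toAngle n w), Real.Angle.cos_add, Real.Angle.cos_add,
    Real.Angle.cos_neg, Real.Angle.sin_neg, toAngle_one, Real.Angle.cos_coe]
  ring

theorem cos_toAngle_neg (n : ℕ) (w : ZMod n) : (toAngle n (-w)).cos = (toAngle n w).cos := by
  rw [map_neg, Real.Angle.cos_neg]

theorem cos_toAngle_zero (n : ℕ) : (toAngle n 0).cos = 1 := by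
  rw [map_zero, Real.Angle.cos_zero]

end ZMod

theorem cos_two_pi_div_ne_one {n : ℕ} (hn : 2 ≤ n) : Real.cos (2 * π / n) ≠ 1 := by
  have hn' : (2 : ℝ) ≤ n := by exact_mod_cast hn
  have hpos : 0 < 2 * π / n := by positivity
  rw [Ne, Real.cos_eq_one_iff_of_lt_of_lt (by linarith [Real.pi_pos])]
  · exact hpos.ne'
  · rw [div_lt_iff₀ (by linarith)]; nlinarith [Real.pi_pos]

theorem laplacian_mul_eq_of_even {A : Type*} [AddCommGroup A] (c : A → ℝ) (t : A) (a : ℝ)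
    (heven : ∀ w, c (-w) = c w) (hrec : ∀ w, c (w + t) + c (w - t) = 2 * a * c w) (v w : A) :
    8 * (c v * c w) - 2 * (c v * c (w + t)) - 2 * (c v * c (w - t)) - 2 * (c (-w) * c v)
      - 2 * (c w * c (-v)) = (4 - 4 * a) * (c v * c w) := by
  rw [heven, heven]
  linear_combination (-2 * c v) * hrec w

theorem stmt_12_general (p : ℕ) [Fact p.Prime] :
    ∃ g : ZMod p → ZMod p → ℝ,
      g ≠ 0 ∧
      (∑ v : ZMod p, ∑ w : ZMod p, g v w) = 0 ∧
      (∀ v w : ZMod p,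
        8 * g v w - 2 * g v (w + 1) - 2 * g v (w - 1) - 2 * g (-w) v - 2 * g w (-v)
          = 8 * Real.sin (Real.pi / p) ^ 2 * g v w) ∧
      8 * Real.sin (Real.pi / p) ^ 2 ≤ 8 * Real.pi ^ 2 / (p : ℝ) ^ 2 := by
  set c : ZMod p → ℝ := fun w => (ZMod.toAngle p w).cos
  have hrec : ∀ w, c (w + 1) + c (w - 1) = 2 * Real.cos (2 * π / p) * c w :=
    ZMod.cos_toAngle_add_add_sub p
  have hsum : ∑ w, c w = 0 := by
    refine Fintype.sum_eq_zero_of_add_add_sub_eq_mul 1 ?_ hrec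
    have := cos_two_pi_div_ne_one (Fact.out : p.Prime).two_le
    contrapose! this
    linarith
  have hsin : 4 - 4 * Real.cos (2 * π / p) = 8 * Real.sin (π / p) ^ 2 := by
    rw [Real.sin_sq_eq_half_sub, mul_div_assoc']
    ring
  refine ⟨fun v w => c v * c w, fun h => ?_, ?_, fun v w => ?_, ?_⟩
  · simpa [c, ZMod.cos_toAngle_zero] using congr_fun₂ h 0 0
  · rw [← Finset.sum_mul_sum, hsum, zero_mul]
  · rw [← hsin]
    exact laplacian_mul_eq_of_even c 1 _ (ZMod.cos_toAngle_neg p) hrec v w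
  · rw [mul_div_assoc, ← div_pow]
    gcongr 8 * ?_
    exact Real.sin_sq_le_sq

/-- For every prime `p ≡ 3 (mod 4)`, the Laplacian of the graph of `F_p[x]/(x²+1)`
has a nonzero eigenfunction orthogonal to the constants whose eigenvalue
`8·sin²(π/p)` is at most `8π²/p²`; hence this family of graphs is not an expander. -/
theorem stmt_12 (p : ℕ) [Fact p.Prime] (hp : p % 4 = 3) :
    ∃ g : ZMod p → ZMod p → ℝ,
      g ≠ 0 ∧
      (∑ v : ZMod p, ∑ w : ZMod p, g v w) = 0 ∧
      (∀ v w : ZMod p,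
        8 * g v w - 2 * g v (w + 1) - 2 * g v (w - 1) - 2 * g (-w) v - 2 * g w (-v)
          = 8 * Real.sin (Real.pi / p) ^ 2 * g v w) ∧
      8 * Real.sin (Real.pi / p) ^ 2 ≤ 8 * Real.pi ^ 2 / (p : ℝ) ^ 2 :=
  stmt_12_general p
end
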